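/- arXiv:2009.04379 — 2 statements merged into one kernel-verified Lean document; each statement's English description precedes it below -/
import Mathlib

section
/- For every positive integer n, 4n(4n+1)(4n−1)·f_{n−1}^{(4)} = (n+1)^3·f_{n+1}^{(4)} − 2(2n+1)(3n^2+3n+1)·f_n^{(4)}, where f_m^{(4)} = ∑_{k=0}^m C(m,k)^4. -/
/-! Creative telescoping (Zeilberger's algorithm). Write `T(n, k)` for the summand
`(n+1)^3 C(n+1,k)^4 - 2(2n+1)(3n^2+3n+1) C(n,k)^4 - 4n(4n+1)(4n-1) C(n-1,k)^4` of the
recurrence. With `G(k) = R(n, k) C(n, k-1)^4` for an explicit polynomial certificate `R`, one has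
`n^4 T(n, k) = G(k+1) - G(k)`; since every binomial ratio is rational in `n, k`, this reduces to
an identity of rational functions. Summing over `0 ≤ k ≤ n+1` telescopes to `G(n+2) - G(0) = 0`. -/

open Finset

theorem Nat.cast_choose_succ_mul {R : Type*} [CommRing R] (n k : ℕ) :
    (n.choose (k + 1) : R) * (k + 1) = n.choose k * (n - k) := by
  rcases le_or_gt k n with hk | hk
  · have := congrArg (Nat.cast : ℕ → R) (Nat.choose_succ_right_eq n k)
    push_cast [Nat.cast_sub hk] at this
    exact this
  · simp [Nat.choose_eq_zero_of_lt hk, Nat.choose_eq_zero_of_lt (Nat.lt_succ_of_lt hk)]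

theorem Nat.cast_choose_mul_succ {R : Type*} [CommRing R] (n k : ℕ) :
    (n.choose k : R) * (n + 1) = (n + 1).choose k * (n + 1 - k) := by
  rcases le_or_gt k (n + 1) with hk | hk
  · have := congrArg (Nat.cast : ℕ → R) (Nat.choose_mul_succ_eq n k)
    push_cast [Nat.cast_sub hk] at this
    exact this
  · simp [Nat.choose_eq_zero_of_lt hk, Nat.choose_eq_zero_of_lt (Nat.lt_of_succ_lt hk)]

/-- The certificate `R(n, k)` produced by Zeilberger's algorithm. -/
def franelCert {R : Type*} [CommRing R] (N K : R) : R :=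
  (-75*N^7 - 275*N^6 - 385*N^5 - 255*N^4 - 80*N^3 - 10*N^2)
  + (260*N^6 + 756*N^5 + 796*N^4 + 368*N^3 + 72*N^2 + 4*N)*K
  + (-374*N^5 - 818*N^4 - 600*N^3 - 172*N^2 - 16*N)*K^2
  + (276*N^4 + 416*N^3 + 184*N^2 + 24*N)*K^3
  + (-104*N^3 - 90*N^2 - 16*N)*K^4
  + (16*N^2 + 4*N)*K^5

theorem franelCert_telescopes {K : Type*} [Field K] {N J a b c d : K} (hN : N ≠ 0)
    (hJ : J + 1 ≠ 0) (hb : b * (J + 1) = a * (N - J)) (hc : c = a + b)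
    (hd : d * N = b * (N - J - 1)) :
    N ^ 4 * ((N + 1) ^ 3 * c ^ 4 - 2 * (2 * N + 1) * (3 * N ^ 2 + 3 * N + 1) * b ^ 4
        - 4 * N * (4 * N + 1) * (4 * N - 1) * d ^ 4)
      = franelCert N (J + 1 + 1) * b ^ 4 - franelCert N (J + 1) * a ^ 4 := by
  rw [← eq_div_iff hJ] at hb
  rw [← eq_div_iff hN] at hd
  subst hb hc hd
  unfold franelCert
  field_simp
  ring

theorem sum_range_choose_pow_of_le {R : Type*} [Semiring R] {n m p : ℕ} (h : n ≤ m)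
    (hp : p ≠ 0) :
    ∑ k ∈ range (m + 1), (n.choose k : R) ^ p = ∑ k ∈ range (n + 1), (n.choose k : R) ^ p := by
  refine (sum_subset (range_subset_range.2 (by omega)) fun k _ hkn => ?_).symm
  rw [Nat.choose_eq_zero_of_lt (by simpa using hkn), Nat.cast_zero, zero_pow hp]

def franelSummand (R : Type*) [CommRing R] (n k : ℕ) : R :=
  (n + 1) ^ 3 * ((n + 1).choose k : R) ^ 4
    - 2 * (2 * n + 1) * (3 * n ^ 2 + 3 * n + 1) * (n.choose k : R) ^ 4
    - 4 * n * (4 * n + 1) * (4 * n - 1) * ((n - 1).choose k : R) ^ 4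

theorem pow_four_mul_franelSummand_zero {R : Type*} [CommRing R] (n : ℕ) :
    (n : R) ^ 4 * franelSummand R n 0 = franelCert (n : R) 1 := by
  simp only [franelSummand, franelCert, Nat.choose_zero_right]
  push_cast
  ring

section CharZero

variable {K : Type*} [Field K] [CharZero K]

theorem pow_four_mul_franelSummand_succ {n : ℕ} (hn : 1 ≤ n) (k : ℕ) :
    (n : K) ^ 4 * franelSummand K n (k + 1)
      = franelCert (n : K) (k + 1 + 1 : ℕ) * (n.choose (k + 1) : K) ^ 4
        - franelCert (n : K) (k + 1 : ℕ) * (n.choose k : K) ^ 4 := by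
  have hc : ((n + 1).choose (k + 1) : K) = n.choose k + n.choose (k + 1) := by
    rw [Nat.choose_succ_succ', Nat.cast_add]
  have hd : ((n - 1).choose (k + 1) : K) * n = n.choose (k + 1) * (n - k - 1) := by
    have := Nat.cast_choose_mul_succ (R := K) (n - 1) (k + 1)
    rwa [Nat.cast_sub hn, Nat.sub_add_cancel hn, Nat.cast_one, sub_add_cancel, Nat.cast_succ,
      ← sub_sub] at this
  have key := franelCert_telescopes (Nat.cast_ne_zero.2 (by omega)) k.cast_add_one_ne_zero
    (Nat.cast_choose_succ_mul n k) hc hd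
  rw [franelSummand]
  push_cast
  exact key

theorem sum_franelSummand {n : ℕ} (hn : 1 ≤ n) :
    ∑ k ∈ range (n + 1 + 1), franelSummand K n k = 0 := by
  have hn4 : (n : K) ^ 4 ≠ 0 := pow_ne_zero 4 (Nat.cast_ne_zero.2 (by omega))
  rw [← mul_right_inj' hn4, mul_sum, sum_range_succ', pow_four_mul_franelSummand_zero]
  simp_rw [pow_four_mul_franelSummand_succ hn]
  rw [sum_range_sub (fun k => franelCert (n : K) (k + 1 : ℕ) * (n.choose k : K) ^ 4)]
  simp [Nat.choose_succ_self]

theorem franel4_recurrence {n : ℕ} (hn : 1 ≤ n) :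
    (n + 1) ^ 3 * ∑ k ∈ range (n + 1 + 1), ((n + 1).choose k : K) ^ 4
      - 2 * (2 * n + 1) * (3 * n ^ 2 + 3 * n + 1) * ∑ k ∈ range (n + 1), (n.choose k : K) ^ 4
      - 4 * n * (4 * n + 1) * (4 * n - 1) * ∑ k ∈ range (n - 1 + 1), ((n - 1).choose k : K) ^ 4
      = 0 := by
  rw [← sum_range_choose_pow_of_le (m := n + 1) (Nat.le_succ n) four_ne_zero,
    ← sum_range_choose_pow_of_le (m := n + 1) (n := n - 1) (by omega) four_ne_zero,
    mul_sum, mul_sum, mul_sum, ← sum_sub_distrib, ← sum_sub_distrib]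
  exact sum_franelSummand hn

end CharZero

theorem franel4_shifted_recurrence (n : ℕ) (hn : 1 ≤ n)
    (f : ℕ → ℤ)
    (hf : ∀ m : ℕ, f m = ∑ k ∈ Finset.range (m + 1), (Nat.choose m k : ℤ) ^ 4) :
    4 * n * (4 * n + 1) * (4 * n - 1) * f (n - 1) =
      (n + 1) ^ 3 * f (n + 1) - 2 * (2 * n + 1) * (3 * n ^ 2 + 3 * n + 1) * f n := by
  have hcast (m : ℕ) : (f m : ℚ) = ∑ k ∈ range (m + 1), (m.choose k : ℚ) ^ 4 := by
    simp [hf]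
  have h := franel4_recurrence (K := ℚ) hn
  rw [← hcast, ← hcast, ← hcast] at h
  exact_mod_cast (sub_eq_zero.mp h).symm
end

section
/- For every natural number n, the polynomial F_n(x) = ∑_{k=0}^n C(n,k)·C(n+2k,2k)·C(2k,k)·x^{n−k} evaluated at x = −4 equals the Franel number f_n = ∑_{k=0}^n C(n,k)^3; that is, F_n(−4) = ∑_{k=0}^n C(n,k)^3. -/
/-!
Both sides are diagonal sums `∑ₖ F(n, k)` of hypergeometric terms. For each of them
Zeilberger's algorithm yields a certificate `G(n, k)`, a rational function times `F(n + 2, k)`,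
such that Franel's recurrence operator
`L u (n) = 8 (n + 1)² u(n) + (7n² + 21n + 16) u(n + 1) - (n + 2)² u(n + 2)`
applied to `F(·, k)` is the difference `G(n, k + 1) - G(n, k)`. Summing over `k` telescopes, so
both sides satisfy Franel's recurrence; they agree at `n = 0, 1`, hence everywhere.
-/

open Finset

section

variable {R : Type*} [CommRing R]

theorem Nat.cast_succ_sub_mul_choose_succ (n k : ℕ) :
    ((n : R) + 1 - k) * ((n + 1).choose k : R) = (n + 1) * n.choose k := by
  rcases le_or_gt k (n + 1) with hk | hk
  · have h := congrArg (Nat.cast : ℕ → R) (Nat.choose_mul_succ_eq n k)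
    push_cast [hk] at h
    linear_combination -h
  · simp [Nat.choose_eq_zero_of_lt hk, Nat.choose_eq_zero_of_lt (show n < k by omega)]

theorem Nat.cast_succ_mul_choose_succ_right (n k : ℕ) :
    ((k : R) + 1) * (n.choose (k + 1) : R) = (n - k) * n.choose k := by
  rcases le_or_gt k n with hk | hk
  · have h := congrArg (Nat.cast : ℕ → R) (Nat.choose_succ_right_eq n k)
    push_cast [hk] at h
    linear_combination h
  · simp [Nat.choose_eq_zero_of_lt hk, Nat.choose_eq_zero_of_lt (show n < k + 1 by omega)]

def franelOperator (u : ℕ → R) (n : ℕ) : R :=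
  8 * (n + 1) ^ 2 * u n + (7 * n ^ 2 + 21 * n + 16) * u (n + 1) - (n + 2) ^ 2 * u (n + 2)

theorem franelOperator_sum (F : ℕ → ℕ → R) (s : Finset ℕ) (n : ℕ) :
    franelOperator (fun m => ∑ k ∈ s, F m k) n = ∑ k ∈ s, franelOperator (F · k) n := by
  simp only [franelOperator, mul_sum, sum_add_distrib, sum_sub_distrib]

def diagSum (F : ℕ → ℕ → R) (n : ℕ) : R :=
  ∑ k ∈ range (n + 1), F n k

theorem diagSum_eq_sum_range {F : ℕ → ℕ → R} (hF : ∀ n k, n < k → F n k = 0) {n N : ℕ}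
    (hN : n < N) : diagSum F n = ∑ k ∈ range N, F n k :=
  sum_subset (range_subset_range.mpr hN) fun k _ hk => hF n k (by simpa using hk)

theorem franelOperator_diagSum_eq_zero {F : ℕ → ℕ → R} (hF : ∀ n k, n < k → F n k = 0)
    (n : ℕ) (G : ℕ → R) (hG : ∀ k, franelOperator (F · k) n = G (k + 1) - G k)
    (hG₀ : G 0 = 0) (hG₃ : G (n + 3) = 0) : franelOperator (diagSum F) n = 0 := by
  calc franelOperator (diagSum F) n
      = franelOperator (fun m => ∑ k ∈ range (n + 3), F m k) n := by
        simp only [franelOperator, diagSum_eq_sum_range hF (show n < n + 3 by omega),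
          diagSum_eq_sum_range hF (show n + 1 < n + 3 by omega),
          diagSum_eq_sum_range hF (show n + 2 < n + 3 by omega)]
    _ = G (n + 3) - G 0 := by rw [franelOperator_sum, sum_congr rfl fun k _ => hG k, sum_range_sub]
    _ = 0 := by rw [hG₃, hG₀, sub_zero]

theorem eq_of_franelOperator_eq_zero [CharZero R] [NoZeroDivisors R] {u v : ℕ → R}
    (hu : ∀ n, franelOperator u n = 0) (hv : ∀ n, franelOperator v n = 0)
    (h₀ : u 0 = v 0) (h₁ : u 1 = v 1) : u = v := by
  suffices h : ∀ n, u n = v n ∧ u (n + 1) = v (n + 1) from funext fun n => (h n).1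
  intro n
  induction n with
  | zero => exact ⟨h₀, h₁⟩
  | succ n ih =>
    refine ⟨ih.2, ?_⟩
    have hn : ((n : R) + 2) ^ 2 ≠ 0 := pow_ne_zero _ (by exact_mod_cast (n + 1).succ_ne_zero)
    have hun := hu n
    have hvn := hv n
    simp only [franelOperator] at hun hvn
    refine mul_left_cancel₀ hn ?_
    linear_combination hvn - hun + 8 * ((n : R) + 1) ^ 2 * ih.1
      + (7 * (n : R) ^ 2 + 21 * n + 16) * ih.2

end

def franelTerm (n k : ℕ) : ℚ := (n.choose k : ℚ) ^ 3

def macMahonTerm (n k : ℕ) : ℚ :=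
  n.choose k * (n + 2 * k).choose (2 * k) * (2 * k).choose k * (-4) ^ (n - k)

theorem franelTerm_eq_zero {n k : ℕ} (h : n < k) : franelTerm n k = 0 := by
  simp [franelTerm, Nat.choose_eq_zero_of_lt h]

theorem macMahonTerm_eq_zero {n k : ℕ} (h : n < k) : macMahonTerm n k = 0 := by
  simp [macMahonTerm, Nat.choose_eq_zero_of_lt h]

theorem succ_sub_mul_macMahonTerm_succ (n k : ℕ) :
    ((n : ℚ) + 1 - k) * macMahonTerm (n + 1) k = -4 * (n + 2 * k + 1) * macMahonTerm n k := by
  have hA := Nat.cast_succ_sub_mul_choose_succ (R := ℚ) n k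
  have hB := Nat.cast_succ_sub_mul_choose_succ (R := ℚ) (n + 2 * k) (2 * k)
  rw [show n + 2 * k + 1 = n + 1 + 2 * k by omega] at hB
  push_cast at hB
  simp only [macMahonTerm]
  rcases le_or_gt k n with hk | hk
  · rw [Nat.sub_add_comm hk, pow_succ]
    linear_combination (-4 * ((2 * k).choose k : ℚ) * (-4) ^ (n - k)) *
      (((n + 1 + 2 * k).choose (2 * k) : ℚ) * hA + (n.choose k : ℚ) * hB)
  · rw [Nat.choose_eq_zero_of_lt hk] at hA ⊢
    linear_combination (((n + 1 + 2 * k).choose (2 * k) : ℚ) * ((2 * k).choose k : ℚ) *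
      (-4) ^ (n + 1 - k)) * hA

theorem succ_mul_macMahonTerm_succ_right (n k : ℕ) :
    -4 * ((k : ℚ) + 1) ^ 3 * macMahonTerm n (k + 1) =
      (n - k) * (n + 2 * k + 1) * (n + 2 * k + 2) * macMahonTerm n k := by
  have hA := Nat.cast_succ_mul_choose_succ_right (R := ℚ) n k
  have hB₁ : ((n + 2 * k + 1 : ℕ) : ℚ) * (n + 2 * k).choose (2 * k) =
      (n + 2 * k + 1).choose (2 * k + 1) * (2 * k + 1 : ℕ) := by
    exact_mod_cast Nat.add_one_mul_choose_eq (n + 2 * k) (2 * k)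
  have hB₂ : ((n + 2 * k + 2 : ℕ) : ℚ) * (n + 2 * k + 1).choose (2 * k + 1) =
      (n + 2 * (k + 1)).choose (2 * (k + 1)) * (2 * k + 2 : ℕ) := by
    exact_mod_cast Nat.add_one_mul_choose_eq (n + 2 * k + 1) (2 * k + 1)
  have hC : ((k + 1 : ℕ) : ℚ) * (2 * (k + 1)).choose (k + 1) =
      2 * (2 * k + 1 : ℕ) * (2 * k).choose k := by
    have h := Nat.succ_mul_centralBinom_succ k
    rw [Nat.centralBinom_eq_two_mul_choose, Nat.centralBinom_eq_two_mul_choose] at h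
    exact_mod_cast h
  push_cast at hB₁ hB₂ hC
  simp only [macMahonTerm]
  rcases lt_or_ge k n with hk | hk
  · rw [show n - k = n - (k + 1) + 1 by omega, pow_succ]
    linear_combination (-4 * (-4 : ℚ) ^ (n - (k + 1))) *
      (((k : ℚ) + 1) ^ 2 * ((2 * (k + 1)).choose (k + 1) : ℚ) *
          ((n + 2 * (k + 1)).choose (2 * (k + 1)) : ℚ) * hA
        + ((n : ℚ) - k) * (k + 1) * (n.choose k : ℚ) *
          ((n + 2 * (k + 1)).choose (2 * (k + 1)) : ℚ) * hC
        - ((n : ℚ) - k) * (2 * k + 1) * (n.choose k : ℚ) * ((2 * k).choose k : ℚ) * hB₂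
        - ((n : ℚ) - k) * (n + 2 * k + 2) * (n.choose k : ℚ) * ((2 * k).choose k : ℚ) * hB₁)
  · rw [Nat.choose_eq_zero_of_lt (show n < k + 1 by omega)] at hA ⊢
    linear_combination ((n : ℚ) + 2 * k + 1) * (n + 2 * k + 2) *
      ((n + 2 * k).choose (2 * k) : ℚ) * ((2 * k).choose k : ℚ) * (-4) ^ (n - k) * hA

def franelCertificate (n k : ℕ) : ℚ :=
  k ^ 3 * (14 * n ^ 5 + 102 * n ^ 4 + 290 * n ^ 3 + 402 * n ^ 2 + 272 * n + 72
      - k * (27 * n ^ 4 + 147 * n ^ 3 + 291 * n ^ 2 + 249 * n + 78)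
      + k ^ 2 * (18 * n ^ 3 + 66 * n ^ 2 + 78 * n + 30) - k ^ 3 * (4 * n ^ 2 + 8 * n + 4)) /
    ((n + 1) ^ 3 * (n + 2) ^ 3) * franelTerm (n + 2) k

def macMahonCertificate (n k : ℕ) : ℚ :=
  3 * (3 * n + 5) * k ^ 3 / ((n + 2 * k + 1) * (n + 2 * k + 2)) * macMahonTerm (n + 2) k

theorem franelOperator_franelTerm (n k : ℕ) :
    franelOperator (franelTerm · k) n = franelCertificate n (k + 1) - franelCertificate n k := by
  have h₀ := Nat.cast_succ_sub_mul_choose_succ (R := ℚ) n k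
  have h₁ := Nat.cast_succ_sub_mul_choose_succ (R := ℚ) (n + 1) k
  have h₂ := Nat.cast_succ_mul_choose_succ_right (R := ℚ) (n + 2) k
  push_cast at h₁ h₂
  -- Everything is expressed through `F(n + 2, k)`: the denominators that occur never vanish.
  have e₁ : ((n + 1).choose k : ℚ) = (n + 2 - k) * (n + 2).choose k / (n + 2) := by
    rw [eq_div_iff (by positivity)]; linear_combination -h₁
  have e₀ : (n.choose k : ℚ) = (n + 1 - k) * (n + 1).choose k / (n + 1) := by
    rw [eq_div_iff (by positivity)]; linear_combination -h₀
  have e₂ : ((n + 2).choose (k + 1) : ℚ) = (n + 2 - k) * (n + 2).choose k / (k + 1) := by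
    rw [eq_div_iff (by positivity)]; linear_combination h₂
  simp only [franelOperator, franelCertificate, franelTerm]
  rw [e₀, e₁, e₂]
  push_cast
  field_simp
  ring

theorem franelOperator_macMahonTerm (n k : ℕ) :
    franelOperator (macMahonTerm · k) n =
      macMahonCertificate n (k + 1) - macMahonCertificate n k := by
  have h₀ := succ_sub_mul_macMahonTerm_succ n k
  have h₁ := succ_sub_mul_macMahonTerm_succ (n + 1) k
  have h₂ := succ_mul_macMahonTerm_succ_right (n + 2) k
  push_cast at h₁ h₂
  have e₁ : macMahonTerm (n + 1) k =
      (n + 2 - k) * macMahonTerm (n + 2) k / (-4 * (n + 2 * k + 2)) := by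
    rw [eq_div_iff (by positivity)]; linear_combination -h₁
  have e₀ : macMahonTerm n k = (n + 1 - k) * macMahonTerm (n + 1) k / (-4 * (n + 2 * k + 1)) := by
    rw [eq_div_iff (by positivity)]; linear_combination -h₀
  have e₂ : macMahonTerm (n + 2) (k + 1) = (n + 2 - k) * (n + 2 * k + 3) * (n + 2 * k + 4) *
      macMahonTerm (n + 2) k / (-4 * (k + 1) ^ 3) := by
    rw [eq_div_iff (by positivity)]; linear_combination h₂
  simp only [franelOperator, macMahonCertificate]
  rw [e₀, e₁, e₂]
  push_cast
  field_simp
  ring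

theorem diagSum_macMahonTerm_eq_diagSum_franelTerm : diagSum macMahonTerm = diagSum franelTerm :=
  eq_of_franelOperator_eq_zero
    (fun n => franelOperator_diagSum_eq_zero (fun _ _ => macMahonTerm_eq_zero) n _
      (franelOperator_macMahonTerm n) (by simp [macMahonCertificate])
      (by simp [macMahonCertificate, macMahonTerm_eq_zero]))
    (fun n => franelOperator_diagSum_eq_zero (fun _ _ => franelTerm_eq_zero) n _
      (franelOperator_franelTerm n) (by simp [franelCertificate])
      (by simp [franelCertificate, franelTerm_eq_zero]))
    (by norm_num [diagSum, macMahonTerm, franelTerm])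
    (by norm_num [diagSum, macMahonTerm, franelTerm, sum_range_succ])

theorem F_at_neg_four_eq_franel (n : ℕ) :
    ∑ k ∈ Finset.range (n + 1),
        (Nat.choose n k * Nat.choose (n + 2 * k) (2 * k) * Nat.choose (2 * k) k : ℤ) *
          (-4) ^ (n - k) =
      ∑ k ∈ Finset.range (n + 1), (Nat.choose n k : ℤ) ^ 3 := by
  have h := congrFun diagSum_macMahonTerm_eq_diagSum_franelTerm n
  simp only [diagSum, macMahonTerm, franelTerm] at h
  exact_mod_cast h
end
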